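/- arXiv:1304.4958 — 2 statements merged into one kernel-verified Lean document; each statement's English description precedes it below -/
import Mathlib

section
/- Let ι : V → Cl(V) be the canonical embedding. For every v ∈ V and every 1 ≤ i ≤ m−1 one has, in Cl(V): e_i ι(v) − ι(v) e_i = ι(X_i v) and f_i ι(v) − ι(v) f_i = ι(X_i^T v), where X_i := E_{i,i+1} + E_{2m+1−i,2m+2−i} (matrix units acting on V in the basis v_1,…,v_{2m+1}); moreover e_m ι(v) − ι(v) e_m = ι(X_m v) and f_m ι(v) − ι(v) f_m = ι(X_m^T v), where X_m := √2 (E_{m,m+1} + E_{m+1,m+2}). (That is, under the commutator action of Cl(V) on V, the quadratic Clifford elements e_i, f_i act as the Chevalley generator matrices of so(2m+1).) -/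
/-!
Formalization of a statement from "A Landau-Ginzburg model for Lagrangian
Grassmannians, Langlands duality, and relations in quantum cohomology"
(arXiv:1304.4958).

Conventions: `V = ℂ^(2m+1)` with 0-based coordinates (`a : Fin (2m+1)`
corresponds to the paper's 1-based basis index `i = a+1`);
`ε(i) = (−1)^(m+1−i)`, written as `(−1)^(m+1+i)` which has the same parity.
-/

noncomputable section
open scoped BigOperators

/-- The ambient `(2m+1)`-dimensional complex vector space `V`. -/
abbrev Vsp (m : ℕ) := Fin (2 * m + 1) → ℂ

/-- `ε(i) = (−1)^(m+1−i) = (−1)^(m+1+i)`. -/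
def eps (m i : ℕ) : ℂ := (-1 : ℂ) ^ (m + 1 + i)

/-- The Gram matrix of the symmetric bilinear form `Φ` determined by
`2Φ(v_i, v_{2m+2−j}) = (−1)^(m+1−i) δ_{ij}` (0-based: nonzero iff `a + b = 2m`,
with value `(−1)^(m+a)/2`). -/
def PhiMat (m : ℕ) : Matrix (Fin (2 * m + 1)) (Fin (2 * m + 1)) ℂ :=
  Matrix.of fun a b => if (a : ℕ) + (b : ℕ) = 2 * m then (-1 : ℂ) ^ (m + (a : ℕ)) / 2 else 0

/-- The symmetric bilinear form `Φ` on `V`. -/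
def Phi (m : ℕ) : LinearMap.BilinForm ℂ (Vsp m) := Matrix.toBilin' (PhiMat m)

/-- The quadratic form `v ↦ Φ(v,v)`. -/
def Qf (m : ℕ) : QuadraticForm ℂ (Vsp m) := (Phi m).toQuadraticMap

/-- The Clifford algebra `Cl(V)` of the quadratic form `v ↦ Φ(v,v)`; in it,
`v v' + v' v = 2Φ(v,v')`. -/
abbrev Cl (m : ℕ) := CliffordAlgebra (Qf m)

/-- The standard basis vector `v_i` of `V`, for a (1-based) paper index `i ∈ {1,…,2m+1}`. -/
def vb (m i : ℕ) : Vsp m := fun a => if (a : ℕ) + 1 = i then 1 else 0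

/-- The image of the basis vector `v_i` in the Clifford algebra. -/
def cv (m i : ℕ) : Cl m := CliffordAlgebra.ι (Qf m) (vb m i)

/-- `e_i := ε(i+1) v_i v̄_{i+1}` for `1 ≤ i ≤ m−1` and `e_m := √2 v_m v_{m+1}`
(recall `v̄_j = v_{2m+2−j}`, so `v̄_{i+1} = v_{2m+1−i}`). -/
def eC (m i : ℕ) : Cl m :=
  if i = m then ((Real.sqrt 2 : ℝ) : ℂ) • (cv m m * cv m (m + 1))
  else eps m (i + 1) • (cv m i * cv m (2 * m + 1 - i))

/-- `f_i := ε(i) v_{i+1} v̄_i` for `1 ≤ i ≤ m−1` and `f_m := √2 v̄_m v_{m+1}`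
(note `v̄_m = v_{m+2}` and `v̄_i = v_{2m+2−i}`). -/
def fC (m i : ℕ) : Cl m :=
  if i = m then ((Real.sqrt 2 : ℝ) : ℂ) • (cv m (m + 2) * cv m (m + 1))
  else eps m i • (cv m (i + 1) * cv m (2 * m + 2 - i))

/-- The matrix `X_i = E_{i,i+1} + E_{2m+1−i,2m+2−i}` (paper 1-based indices) for
`1 ≤ i ≤ m−1`, and `X_m = √2 (E_{m,m+1} + E_{m+1,m+2})`. -/
def XeMat (m i : ℕ) : Matrix (Fin (2 * m + 1)) (Fin (2 * m + 1)) ℂ :=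
  if i = m then
    Matrix.of fun a b =>
      if ((a : ℕ) + 1 = m ∧ (b : ℕ) = m) ∨ ((a : ℕ) = m ∧ (b : ℕ) = m + 1)
      then ((Real.sqrt 2 : ℝ) : ℂ) else 0
  else
    Matrix.of fun a b =>
      if ((a : ℕ) + 1 = i ∧ (b : ℕ) = i) ∨
          ((a : ℕ) + 1 = 2 * m + 1 - i ∧ (b : ℕ) + 1 = 2 * m + 2 - i)
      then 1 else 0

lemma negpow_mul (a b : ℕ) (h : (a+b) % 2 = 0) : (-1:ℂ)^a * (-1:ℂ)^b = 1 := by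
  rw [← pow_add, neg_one_pow_eq_pow_mod_two, h, pow_zero]

lemma negpow_mul_odd (a b : ℕ) (h : (a+b) % 2 = 1) : (-1:ℂ)^a * (-1:ℂ)^b = -1 := by
  rw [← pow_add, neg_one_pow_eq_pow_mod_two, h, pow_one]

lemma negpow_eq (a b : ℕ) (h : a % 2 = b % 2) : (-1:ℂ)^a = (-1:ℂ)^b := by
  rw [neg_one_pow_eq_pow_mod_two, h, ← neg_one_pow_eq_pow_mod_two]

lemma sum_if_coord {n k : ℕ} (hk : k < n) (f : Fin n → ℂ) :
    (∑ b : Fin n, if (b : ℕ) = k then f b else 0) = f ⟨k, hk⟩ := by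
  have h : ∀ b : Fin n, ((b:ℕ) = k) ↔ b = ⟨k,hk⟩ := fun b => by simp [Fin.ext_iff]
  simp only [h]
  simp

lemma Phi_vb_left (m j : ℕ) (h1 : 1 ≤ j) (h2 : j ≤ 2*m+1) (v : Vsp m) :
    Phi m (vb m j) v = (-1:ℂ)^(m+j-1)/2 * v ⟨2*m+1-j, by omega⟩ := by
  rw [Phi, Matrix.toBilin'_apply', dotProduct]
  rw [show (∑ a, vb m j a * ((PhiMat m).mulVec v) a)
      = ∑ a : Fin (2*m+1), if (a:ℕ) = j-1 then ((PhiMat m).mulVec v) a else 0 by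
    refine Finset.sum_congr rfl fun a _ => ?_
    by_cases h : (a:ℕ) + 1 = j
    · rw [show vb m j a = 1 by simp [vb, h], one_mul, if_pos (by omega)]
    · rw [show vb m j a = 0 by simp [vb, h], zero_mul, if_neg (by omega)]]
  rw [sum_if_coord (by omega)]
  rw [Matrix.mulVec, dotProduct]
  rw [show (∑ b, PhiMat m ⟨j-1, by omega⟩ b * v b)
      = ∑ b : Fin (2*m+1), if (b:ℕ) = 2*m+1-j then (-1:ℂ)^(m+j-1)/2 * v b else 0 by
    refine Finset.sum_congr rfl fun b _ => ?_
    simp only [PhiMat, Matrix.of_apply]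
    by_cases h : (j-1) + (b:ℕ) = 2*m
    · rw [if_pos (by simpa using h), if_pos (by omega),
        show m + ((⟨j-1, by omega⟩ : Fin (2*m+1)) : ℕ) = m + j - 1 by simp; omega]
    · rw [if_neg (by simpa using h), if_neg (by omega), zero_mul]]
  rw [sum_if_coord (by omega)]

lemma Phi_vb_right (m j : ℕ) (h1 : 1 ≤ j) (h2 : j ≤ 2*m+1) (v : Vsp m) :
    Phi m v (vb m j) = (-1:ℂ)^(m+j-1)/2 * v ⟨2*m+1-j, by omega⟩ := by
  rw [Phi, Matrix.toBilin'_apply', dotProduct]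
  rw [show (∑ a, v a * ((PhiMat m).mulVec (vb m j)) a)
      = ∑ a : Fin (2*m+1), if (a:ℕ) = 2*m+1-j then (-1:ℂ)^(m+j-1)/2 * v a else 0 by
    refine Finset.sum_congr rfl fun a _ => ?_
    rw [Matrix.mulVec, dotProduct]
    rw [show (∑ b, PhiMat m a b * vb m j b)
        = ∑ b : Fin (2*m+1), if ((a:ℕ) = 2*m+1-j ∧ (b:ℕ) = j-1) then (-1:ℂ)^(m+j-1)/2 else 0 by
      refine Finset.sum_congr rfl fun b _ => ?_
      simp only [PhiMat, Matrix.of_apply, vb]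
      by_cases hb : (b:ℕ) + 1 = j
      · by_cases ha : (a:ℕ) + (b:ℕ) = 2*m
        · rw [if_pos ha, if_pos hb, if_pos (by omega), mul_one,
            negpow_eq (m+(a:ℕ)) (m+j-1) (by omega)]
        · rw [if_neg ha, if_pos hb, if_neg (by omega), zero_mul]
      · rw [show (if (b:ℕ)+1 = j then (1:ℂ) else 0) = 0 from if_neg hb, mul_zero,
          if_neg (by omega)]]
    by_cases ha : (a:ℕ) = 2*m+1-j
    · have hcond : ∀ b : Fin (2*m+1),
          (((a:ℕ) = 2*m+1-j ∧ (b:ℕ) = j-1)) = ((b:ℕ) = j-1) := fun b => by simp [ha]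
      simp only [hcond]
      rw [sum_if_coord (by omega), if_pos ha]
      ring
    · rw [show (∑ b : Fin (2*m+1), if ((a:ℕ) = 2*m+1-j ∧ (b:ℕ) = j-1)
          then (-1:ℂ)^(m+j-1)/2 else 0) = 0 from by simp [ha], mul_zero, if_neg ha]]
  rw [sum_if_coord (by omega)]

lemma polar_vb (m j : ℕ) (h1 : 1 ≤ j) (h2 : j ≤ 2*m+1) (v : Vsp m) :
    QuadraticMap.polar (Qf m) (vb m j) v = (-1:ℂ)^(m+j-1) * v ⟨2*m+1-j, by omega⟩ := by
  rw [Qf, LinearMap.BilinMap.polar_toQuadraticMap,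
    Phi_vb_left m j h1 h2 v, Phi_vb_right m j h1 h2 v]
  ring

lemma comm_quad (m : ℕ) (x y w : Vsp m) :
    (CliffordAlgebra.ι (Qf m) x * CliffordAlgebra.ι (Qf m) y) * CliffordAlgebra.ι (Qf m) w
      - CliffordAlgebra.ι (Qf m) w * (CliffordAlgebra.ι (Qf m) x * CliffordAlgebra.ι (Qf m) y)
    = CliffordAlgebra.ι (Qf m)
        (QuadraticMap.polar (Qf m) y w • x - QuadraticMap.polar (Qf m) x w • y) := by
  have h1 := CliffordAlgebra.ι_mul_ι_comm (Q := Qf m) y w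
  have h2 := CliffordAlgebra.ι_mul_ι_comm (Q := Qf m) w x
  rw [map_sub, map_smul, map_smul, mul_assoc, h1, ← mul_assoc, h2,
    QuadraticMap.polar_comm (Qf m) w x, mul_sub, sub_mul, Algebra.smul_def, Algebra.smul_def,
    mul_assoc, Algebra.commutes]
  rw [show (CliffordAlgebra.ι (Qf m)) x
        * (algebraMap ℂ (CliffordAlgebra (Qf m))) (QuadraticMap.polar (⇑(Qf m)) y w)
      = (algebraMap ℂ (CliffordAlgebra (Qf m))) (QuadraticMap.polar (⇑(Qf m)) y w)
        * (CliffordAlgebra.ι (Qf m)) x from (Algebra.commutes _ _).symm]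
  abel

lemma smul_comm_quad (m : ℕ) (c : ℂ) (x y w : Vsp m) :
    (c • (CliffordAlgebra.ι (Qf m) x * CliffordAlgebra.ι (Qf m) y)) * CliffordAlgebra.ι (Qf m) w
      - CliffordAlgebra.ι (Qf m) w
          * (c • (CliffordAlgebra.ι (Qf m) x * CliffordAlgebra.ι (Qf m) y))
    = CliffordAlgebra.ι (Qf m)
        (c • (QuadraticMap.polar (Qf m) y w • x - QuadraticMap.polar (Qf m) x w • y)) := by
  rw [smul_mul_assoc, mul_smul_comm, ← smul_sub, comm_quad, map_smul]

lemma mulVec_two (m : ℕ) (M : Matrix (Fin (2*m+1)) (Fin (2*m+1)) ℂ) (c : ℂ)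
    (s₁ c₁ s₂ c₂ : ℕ) (hs : s₁ ≠ s₂) (hc₁ : c₁ < 2*m+1) (hc₂ : c₂ < 2*m+1)
    (hM : ∀ a b : Fin (2*m+1), M a b
      = if ((a:ℕ)+1 = s₁ ∧ (b:ℕ) = c₁) ∨ ((a:ℕ)+1 = s₂ ∧ (b:ℕ) = c₂) then c else 0)
    (v : Vsp m) :
    M.mulVec v = fun a : Fin (2*m+1) => (if (a:ℕ)+1 = s₁ then c * v ⟨c₁, hc₁⟩ else 0)
      + (if (a:ℕ)+1 = s₂ then c * v ⟨c₂, hc₂⟩ else 0) := by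
  funext a
  rw [Matrix.mulVec, dotProduct]
  by_cases h1 : (a:ℕ)+1 = s₁
  · rw [show (∑ b, M a b * v b) = ∑ b : Fin (2*m+1), if (b:ℕ) = c₁ then c * v b else 0 from
      Finset.sum_congr rfl fun b _ => by
        rw [hM]
        by_cases hb : (b:ℕ) = c₁
        · rw [if_pos (Or.inl ⟨h1, hb⟩), if_pos hb]
        · rw [if_neg ?_, zero_mul, if_neg hb]
          rintro (⟨_, h⟩ | ⟨h, _⟩)
          · exact hb h
          · omega]
    rw [sum_if_coord hc₁, if_pos h1, if_neg (by omega), add_zero]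
  by_cases h2 : (a:ℕ)+1 = s₂
  · rw [show (∑ b, M a b * v b) = ∑ b : Fin (2*m+1), if (b:ℕ) = c₂ then c * v b else 0 from
      Finset.sum_congr rfl fun b _ => by
        rw [hM]
        by_cases hb : (b:ℕ) = c₂
        · rw [if_pos (Or.inr ⟨h2, hb⟩), if_pos hb]
        · rw [if_neg ?_, zero_mul, if_neg hb]
          rintro (⟨h, _⟩ | ⟨_, h⟩)
          · omega
          · exact hb h]
    rw [sum_if_coord hc₂, if_neg h1, if_pos h2, zero_add]
  · rw [show (∑ b, M a b * v b) = ∑ b : Fin (2*m+1), (0:ℂ) from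
      Finset.sum_congr rfl fun b _ => by
        rw [hM, if_neg, zero_mul]
        rintro (⟨h, _⟩ | ⟨h, _⟩)
        · exact h1 h
        · exact h2 h]
    rw [Finset.sum_const_zero, if_neg h1, if_neg h2, add_zero]

/-- For every `v ∈ V` and every `1 ≤ i ≤ m` one has, in `Cl(V)`:
`e_i ι(v) − ι(v) e_i = ι(X_i v)` and `f_i ι(v) − ι(v) f_i = ι(X_i^T v)`; that is, under
the commutator action the quadratic Clifford elements `e_i, f_i` act on `V` as the
Chevalley generator matrices of `so(2m+1)`. -/
theorem commutator_action_on_V (m : ℕ) (hm : 2 ≤ m) (v : Vsp m)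
    (i : ℕ) (hi : 1 ≤ i) (him : i ≤ m) :
    eC m i * CliffordAlgebra.ι (Qf m) v - CliffordAlgebra.ι (Qf m) v * eC m i
        = CliffordAlgebra.ι (Qf m) ((XeMat m i).mulVec v) ∧
    fC m i * CliffordAlgebra.ι (Qf m) v - CliffordAlgebra.ι (Qf m) v * fC m i
        = CliffordAlgebra.ι (Qf m) ((XeMat m i).transpose.mulVec v) := by
  by_cases hne : i = m
  · constructor
    · -- e_m
      simp only [eC, cv, XeMat, if_pos hne]
      rw [smul_comm_quad]
      congr 1
      have hp1 : QuadraticMap.polar (Qf m) (vb m (m+1)) v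
          = v ⟨m, by omega⟩ := by
        rw [polar_vb m (m+1) (by omega) (by omega) v]
        simp only [show 2*m+1-(m+1) = m from by omega, show m+(m+1)-1 = 2*m from by omega]
        rw [show ((-1:ℂ))^(2*m) = 1 from by
          rw [neg_one_pow_eq_pow_mod_two, show (2*m) % 2 = 0 from by omega, pow_zero], one_mul]
      have hp2 : QuadraticMap.polar (Qf m) (vb m m) v
          = -v ⟨m+1, by omega⟩ := by
        rw [polar_vb m m (by omega) (by omega) v]
        simp only [show 2*m+1-m = m+1 from by omega, show m+m-1 = 2*m-1 from by omega]
        rw [show ((-1:ℂ))^(2*m-1) = -1 from by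
          rw [neg_one_pow_eq_pow_mod_two, show (2*m-1) % 2 = 1 from by omega, pow_one]]
        ring
      rw [hp1, hp2,
        mulVec_two m _ (((Real.sqrt 2 : ℝ) : ℂ)) m m (m+1) (m+1) (by omega) (by omega) (by omega)
          (fun a b => by
            simp only [Matrix.of_apply]
            refine if_congr ⟨fun h => ?_, fun h => ?_⟩ rfl rfl <;> omega)]
      funext a
      simp only [Pi.smul_apply, Pi.sub_apply, vb, smul_eq_mul]
      by_cases h1 : (a:ℕ)+1 = m
      · rw [if_pos h1, if_pos h1, if_neg (by omega), if_neg (by omega)]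
        ring
      by_cases h2 : (a:ℕ)+1 = m+1
      · rw [if_neg h1, if_neg h1, if_pos h2, if_pos h2]
        ring
      · rw [if_neg h1, if_neg h1, if_neg h2, if_neg h2]
        ring
    · -- f_m
      simp only [fC, cv, XeMat, if_pos hne]
      rw [smul_comm_quad]
      congr 1
      have hp1 : QuadraticMap.polar (Qf m) (vb m (m+1)) v
          = v ⟨m, by omega⟩ := by
        rw [polar_vb m (m+1) (by omega) (by omega) v]
        simp only [show 2*m+1-(m+1) = m from by omega, show m+(m+1)-1 = 2*m from by omega]
        rw [show ((-1:ℂ))^(2*m) = 1 from by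
          rw [neg_one_pow_eq_pow_mod_two, show (2*m) % 2 = 0 from by omega, pow_zero], one_mul]
      have hp2 : QuadraticMap.polar (Qf m) (vb m (m+2)) v
          = -v ⟨m-1, by omega⟩ := by
        rw [polar_vb m (m+2) (by omega) (by omega) v]
        simp only [show 2*m+1-(m+2) = m-1 from by omega, show m+(m+2)-1 = 2*m+1 from by omega]
        rw [show ((-1:ℂ))^(2*m+1) = -1 from by
          rw [neg_one_pow_eq_pow_mod_two, show (2*m+1) % 2 = 1 from by omega, pow_one]]
        ring
      rw [hp1, hp2,
        mulVec_two m _ (((Real.sqrt 2 : ℝ) : ℂ)) (m+1) (m-1) (m+2) m (by omega) (by omega)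
          (by omega)
          (fun a b => by
            simp only [Matrix.transpose_apply, Matrix.of_apply]
            refine if_congr ⟨fun h => ?_, fun h => ?_⟩ rfl rfl <;> omega)]
      funext a
      simp only [Pi.smul_apply, Pi.sub_apply, vb, smul_eq_mul]
      by_cases h1 : (a:ℕ)+1 = m+1
      · rw [if_neg (by omega), if_pos h1, if_pos h1, if_neg (by omega)]
        ring
      by_cases h2 : (a:ℕ)+1 = m+2
      · rw [if_pos h2, if_neg h1, if_neg h1, if_pos h2]
        ring
      · rw [if_neg h2, if_neg h1, if_neg h1, if_neg h2]
        ring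
  · -- 1 ≤ i ≤ m-1
    have him' : i + 1 ≤ m := by omega
    constructor
    · -- e_i
      simp only [eC, if_neg hne, cv, XeMat, if_neg hne]
      rw [smul_comm_quad]
      congr 1
      have hp1 : QuadraticMap.polar (Qf m) (vb m (2*m+1-i)) v
          = (-1:ℂ)^(3*m-i) * v ⟨i, by omega⟩ := by
        rw [polar_vb m (2*m+1-i) (by omega) (by omega) v]
        simp only [show 2*m+1-(2*m+1-i) = i from by omega,
          show m+(2*m+1-i)-1 = 3*m-i from by omega]
      have hp2 : QuadraticMap.polar (Qf m) (vb m i) v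
          = (-1:ℂ)^(m+i-1) * v ⟨2*m+1-i, by omega⟩ := by
        rw [polar_vb m i (by omega) (by omega) v]
      rw [hp1, hp2,
        mulVec_two m _ 1 i i (2*m+1-i) (2*m+1-i) (by omega) (by omega) (by omega)
          (fun a b => by
            simp only [Matrix.of_apply]
            refine if_congr ⟨fun h => ?_, fun h => ?_⟩ rfl rfl <;> omega)]
      have s1 : eps m (i+1) * (-1:ℂ)^(3*m-i) = 1 := by
        rw [eps]
        exact negpow_mul _ _ (by omega)
      have s2 : eps m (i+1) * (-1:ℂ)^(m+i-1) = -1 := by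
        rw [eps]
        exact negpow_mul_odd _ _ (by omega)
      funext a
      simp only [Pi.smul_apply, Pi.sub_apply, vb, smul_eq_mul]
      by_cases h1 : (a:ℕ)+1 = i
      · rw [if_pos h1, if_pos h1, if_neg (by omega), if_neg (by omega)]
        linear_combination v ⟨i, by omega⟩ * s1
      by_cases h2 : (a:ℕ)+1 = 2*m+1-i
      · rw [if_neg h1, if_neg h1, if_pos h2, if_pos h2]
        linear_combination (-(v ⟨2*m+1-i, by omega⟩)) * s2
      · rw [if_neg h1, if_neg h1, if_neg h2, if_neg h2]
        ring
    · -- f_i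
      simp only [fC, if_neg hne, cv, XeMat, if_neg hne]
      rw [smul_comm_quad]
      congr 1
      have hp1 : QuadraticMap.polar (Qf m) (vb m (2*m+2-i)) v
          = (-1:ℂ)^(3*m+1-i) * v ⟨i-1, by omega⟩ := by
        rw [polar_vb m (2*m+2-i) (by omega) (by omega) v]
        simp only [show 2*m+1-(2*m+2-i) = i-1 from by omega,
          show m+(2*m+2-i)-1 = 3*m+1-i from by omega]
      have hp2 : QuadraticMap.polar (Qf m) (vb m (i+1)) v
          = (-1:ℂ)^(m+i) * v ⟨2*m-i, by omega⟩ := by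
        rw [polar_vb m (i+1) (by omega) (by omega) v]
        simp only [show 2*m+1-(i+1) = 2*m-i from by omega,
          show m+(i+1)-1 = m+i from by omega]
      rw [hp1, hp2,
        mulVec_two m _ 1 (i+1) (i-1) (2*m+2-i) (2*m-i) (by omega) (by omega) (by omega)
          (fun a b => by
            simp only [Matrix.transpose_apply, Matrix.of_apply]
            refine if_congr ⟨fun h => ?_, fun h => ?_⟩ rfl rfl <;> omega)]
      have s1 : eps m i * (-1:ℂ)^(3*m+1-i) = 1 := by
        rw [eps]
        exact negpow_mul _ _ (by omega)
      have s2 : eps m i * (-1:ℂ)^(m+i) = -1 := by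
        rw [eps]
        exact negpow_mul_odd _ _ (by omega)
      funext a
      simp only [Pi.smul_apply, Pi.sub_apply, vb, smul_eq_mul]
      by_cases h1 : (a:ℕ)+1 = i+1
      · rw [if_pos h1, if_pos h1, if_neg (by omega), if_neg (by omega)]
        linear_combination v ⟨i-1, by omega⟩ * s1
      by_cases h2 : (a:ℕ)+1 = 2*m+2-i
      · rw [if_neg h1, if_neg h1, if_pos h2, if_pos h2]
        linear_combination (-(v ⟨2*m-i, by omega⟩)) * s2
      · rw [if_neg h1, if_neg h1, if_neg h2, if_neg h2]
        ring


end
end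

section
/- In the Coxeter group of type B_m with simple generators s_1, …, s_m, the word obtained by concatenating the blocks (s_{m−l}, s_{m−l+1}, …, s_m) for l = 0, 1, …, m−1 (i.e. s_m; s_{m−1} s_m; s_{m−2} s_{m−1} s_m; …; s_1 s_2 ⋯ s_m) is a reduced word; equivalently, the Coxeter length of the product of this word is m(m+1)/2. -/
/-!
Formalization of a statement from "A Landau-Ginzburg model for Lagrangian
Grassmannians, Langlands duality, and relations in quantum cohomology"
(arXiv:1304.4958).

Conventions: `V = ℂ^(2m+1)` with 0-based coordinates (`a : Fin (2m+1)`
corresponds to the paper's 1-based basis index `i = a+1`);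
`ε(i) = (−1)^(m+1−i)`, written as `(−1)^(m+1+i)` which has the same parity.
-/

noncomputable section
open scoped BigOperators

/-- The word `(s_m); (s_{m−1}, s_m); …; (s_1, s_2, …, s_m)` as a list of generator
indices: 0-based, so the paper's generator `s_i` corresponds to `i−1 : Fin m`
(the values `m−l+t−1` below all lie in `[0, m−1]`, so reducing mod `m` is the identity). -/
def wordListFin (m : ℕ) (hm : 0 < m) : List (Fin m) :=
  (List.range m).flatMap (fun l =>
    (List.range (l + 1)).map (fun t => ⟨(m - l + t - 1) % m, Nat.mod_lt _ hm⟩))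

namespace StaircaseAux

open Equiv

/-- Product of three swaps `(a b)(c d)(b c)` squares to `(a d)(b c)`. -/
lemma braid4_sq (a b c d : ℤ) (h1 : a ≠ b) (h2 : a ≠ c) (h3 : a ≠ d) (h4 : b ≠ c)
    (h5 : b ≠ d) (h6 : c ≠ d) :
    ((Equiv.swap a b * Equiv.swap c d) * Equiv.swap b c) ^ 2
      = Equiv.swap a d * Equiv.swap b c := by
  rw [pow_succ, pow_one]
  ext x
  rcases eq_or_ne x a with rfl | hxa
  · simp [Equiv.swap_apply_of_ne_of_ne, h1, h2, h3, h4, h5, h6,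
      h1.symm, h2.symm, h3.symm, h4.symm, h5.symm, h6.symm]
  rcases eq_or_ne x b with rfl | hxb
  · simp [Equiv.swap_apply_of_ne_of_ne, h1, h2, h3, h4, h5, h6,
      h1.symm, h2.symm, h3.symm, h4.symm, h5.symm, h6.symm]
  rcases eq_or_ne x c with rfl | hxc
  · simp [Equiv.swap_apply_of_ne_of_ne, h1, h2, h3, h4, h5, h6,
      h1.symm, h2.symm, h3.symm, h4.symm, h5.symm, h6.symm]
  rcases eq_or_ne x d with rfl | hxd
  · simp [Equiv.swap_apply_of_ne_of_ne, h1, h2, h3, h4, h5, h6,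
      h1.symm, h2.symm, h3.symm, h4.symm, h5.symm, h6.symm]
  · simp [Equiv.swap_apply_of_ne_of_ne, hxa, hxb, hxc, hxd]

lemma braid3 (a b c : ℤ) (h1 : a ≠ b) (h2 : b ≠ c) (h3 : a ≠ c) :
    (Equiv.swap a b * Equiv.swap b c) ^ 3 = 1 := by
  rw [pow_succ, pow_succ, pow_one]
  ext x
  rcases eq_or_ne x a with rfl | hxa
  · simp [Equiv.swap_apply_of_ne_of_ne, h1, h2, h3, h1.symm, h2.symm, h3.symm]
  rcases eq_or_ne x b with rfl | hxb
  · simp [Equiv.swap_apply_of_ne_of_ne, h1, h2, h3, h1.symm, h2.symm, h3.symm]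
  rcases eq_or_ne x c with rfl | hxc
  · simp [Equiv.swap_apply_of_ne_of_ne, h1, h2, h3, h1.symm, h2.symm, h3.symm]
  · simp [Equiv.swap_apply_of_ne_of_ne, hxa, hxb, hxc]

lemma commute_swap_swap (a b c d : ℤ) (h1 : a ≠ c) (h2 : a ≠ d) (h3 : b ≠ c) (h4 : b ≠ d) :
    Commute (Equiv.swap a b) (Equiv.swap c d) := by
  have : Equiv.swap a b * Equiv.swap c d = Equiv.swap c d * Equiv.swap a b := by
    ext x
    simp only [Equiv.Perm.mul_apply, Equiv.swap_apply_def]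
    split_ifs <;> omega
  exact this

/-- The signed-permutation image of the `i`-th simple generator of `Bₘ`,
acting on positions `1, …, 2m` (position `j ≤ m` encodes the signed value `j`;
position `j > m` encodes the signed value `-(2m+1-j)`). -/
def e (m : ℕ) (i : Fin m) : Equiv.Perm ℤ :=
  if (i : ℕ) + 2 ≤ m then
    Equiv.swap (((i:ℕ):ℤ) + 1) ((((i:ℕ):ℤ) + 1) + 1) *
      Equiv.swap ((2 * (m:ℤ) - ((i:ℕ):ℤ)) - 1) (2 * (m:ℤ) - ((i:ℕ):ℤ))
  else Equiv.swap (m : ℤ) ((m : ℤ) + 1)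

lemma e_eq_lo (m : ℕ) (i : Fin m) (h : (i : ℕ) + 2 ≤ m) :
    e m i = Equiv.swap (((i:ℕ):ℤ) + 1) ((((i:ℕ):ℤ) + 1) + 1) *
      Equiv.swap ((2 * (m:ℤ) - ((i:ℕ):ℤ)) - 1) (2 * (m:ℤ) - ((i:ℕ):ℤ)) := by
  unfold e; rw [if_pos h]

lemma e_eq_hi (m : ℕ) (i : Fin m) (h : ¬ ((i : ℕ) + 2 ≤ m)) :
    e m i = Equiv.swap (m : ℤ) ((m : ℤ) + 1) := by
  unfold e; rw [if_neg h]

lemma e_mul_self (m : ℕ) (i : Fin m) : e m i * e m i = 1 := by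
  by_cases h : (i : ℕ) + 2 ≤ m
  · rw [e_eq_lo m i h]
    have hc := commute_swap_swap ((2 * (m:ℤ) - ((i:ℕ):ℤ)) - 1) (2 * (m:ℤ) - ((i:ℕ):ℤ))
      (((i:ℕ):ℤ) + 1) ((((i:ℕ):ℤ) + 1) + 1)
      (by omega) (by omega) (by omega) (by omega)
    rw [mul_assoc, ← mul_assoc (Equiv.swap ((2 * (m:ℤ) - ((i:ℕ):ℤ)) - 1) _), hc.eq,
      mul_assoc, ← mul_assoc, ← mul_assoc, mul_assoc _ _ (Equiv.swap ((2 * (m:ℤ) - ((i:ℕ):ℤ)) - 1) _)]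
    rw [Equiv.swap_mul_self, Equiv.swap_mul_self]
    simp
  · rw [e_eq_hi m i h, Equiv.swap_mul_self]

lemma sq_one {G : Type*} [Group G] (x y : G) (hx : x * x = 1) (hy : y * y = 1)
    (h : Commute x y) : (x * y) ^ 2 = 1 := by
  rw [h.mul_pow, pow_two, pow_two, hx, hy, mul_one]

lemma pow_rev {G : Type*} [Group G] (x y : G) (hx : x * x = 1) (hy : y * y = 1) (n : ℕ)
    (h : (x * y) ^ n = 1) : (y * x) ^ n = 1 := by
  have hinv : y * x = (x * y)⁻¹ := by
    rw [mul_inv_rev, inv_eq_of_mul_eq_one_left hx, inv_eq_of_mul_eq_one_left hy]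
  rw [hinv, inv_pow, h, inv_one]

/-- The braid relation of order 3 for neighbouring generators, at the level of ℤ. -/
lemma relation3 (p q : ℤ) (h : p + 2 < q - 2) :
    ((Equiv.swap p (p+1) * Equiv.swap (q-1) q) *
      (Equiv.swap (p+1) (p+2) * Equiv.swap (q-2) (q-1))) ^ 3 = 1 := by
  have hcomm : Commute (Equiv.swap (q-1) q) (Equiv.swap (p+1) (p+2)) :=
    commute_swap_swap (q-1) q (p+1) (p+2) (by omega) (by omega) (by omega) (by omega)
  have key : (Equiv.swap p (p+1) * Equiv.swap (q-1) q) *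
      (Equiv.swap (p+1) (p+2) * Equiv.swap (q-2) (q-1))
      = (Equiv.swap p (p+1) * Equiv.swap (p+1) (p+2)) *
        (Equiv.swap (q-1) q * Equiv.swap (q-2) (q-1)) := by
    rw [mul_assoc, ← mul_assoc (Equiv.swap (q-1) q), hcomm.eq, mul_assoc, ← mul_assoc]
  rw [key]
  have hP : (Equiv.swap p (p+1) * Equiv.swap (p+1) (p+2)) ^ 3 = 1 :=
    braid3 p (p+1) (p+2) (by omega) (by omega) (by omega)
  have hQ : (Equiv.swap (q-1) q * Equiv.swap (q-2) (q-1)) ^ 3 = 1 := by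
    rw [Equiv.swap_comm (q-1) q, Equiv.swap_comm (q-2) (q-1)]
    exact braid3 q (q-1) (q-2) (by omega) (by omega) (by omega)
  have hPQ : Commute (Equiv.swap p (p+1) * Equiv.swap (p+1) (p+2))
      (Equiv.swap (q-1) q * Equiv.swap (q-2) (q-1)) := by
    have c1 := commute_swap_swap p (p+1) (q-1) q (by omega) (by omega) (by omega) (by omega)
    have c2 := commute_swap_swap p (p+1) (q-2) (q-1) (by omega) (by omega) (by omega) (by omega)
    have c3 := commute_swap_swap (p+1) (p+2) (q-1) q (by omega) (by omega) (by omega) (by omega)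
    have c4 := commute_swap_swap (p+1) (p+2) (q-2) (q-1) (by omega) (by omega) (by omega)
      (by omega)
    exact (c1.mul_right c2).mul_left (c3.mul_right c4)
  rw [hPQ.mul_pow, hP, hQ, mul_one]

/-- The braid relation of order 3 in exactly the form produced by `e_eq_lo`. -/
lemma relation3' (M z : ℤ) (h : z + 3 ≤ M) :
    ((Equiv.swap (z+1) ((z+1)+1) * Equiv.swap ((2*M-z)-1) (2*M-z)) *
      (Equiv.swap ((z+1)+1) (((z+1)+1)+1) *
        Equiv.swap ((2*M-(z+1))-1) (2*M-(z+1)))) ^ 3 = 1 := by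
  rw [show (((z+1)+1)+1 : ℤ) = (z+1)+2 by ring,
      show ((2*M-(z+1))-1 : ℤ) = (2*M-z)-2 by ring,
      show (2*M-(z+1) : ℤ) = (2*M-z)-1 by ring]
  exact relation3 (z+1) (2*M-z) (by omega)

/-- The braid relation of order 4 in the form needed for the pair `(m-2, m-1)`. -/
lemma relation4 (M : ℤ) :
    ((Equiv.swap (M-1) M * Equiv.swap (M+1) (M+2)) * Equiv.swap M (M+1)) ^ 4 = 1 := by
  have h2 : ((Equiv.swap (M-1) M * Equiv.swap (M+1) (M+2)) * Equiv.swap M (M+1)) ^ 2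
      = Equiv.swap (M-1) (M+2) * Equiv.swap M (M+1) :=
    braid4_sq (M-1) M (M+1) (M+2) (by omega) (by omega) (by omega) (by omega) (by omega)
      (by omega)
  rw [show (4:ℕ) = 2*2 from rfl, pow_mul, h2]
  exact sq_one _ _ (Equiv.swap_mul_self _ _) (Equiv.swap_mul_self _ _)
    (commute_swap_swap (M-1) (M+2) M (M+1) (by omega) (by omega) (by omega) (by omega))

/-- Braid relation of order 4 for the pair `(m-2, m-1)`. -/
lemma rel_four (m : ℕ) (hm : 2 ≤ m) (i j : Fin m) (hi : (i : ℕ) = m - 2)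
    (hj : (j : ℕ) = m - 1) : (e m i * e m j) ^ 4 = 1 := by
  rw [e_eq_lo m i (by omega), e_eq_hi m j (by omega),
    show (((i:ℕ):ℤ) + 1) = (m:ℤ) - 1 by omega,
    show (((m:ℤ) - 1) + 1) = (m:ℤ) by ring,
    show ((2 * (m:ℤ) - ((i:ℕ):ℤ)) - 1) = (m:ℤ) + 1 by omega,
    show (2 * (m:ℤ) - ((i:ℕ):ℤ)) = (m:ℤ) + 2 by omega]
  exact relation4 (m:ℤ)

/-- Braid relation of order 3 for adjacent generators below the top. -/
lemma rel_three (m : ℕ) (i j : Fin m) (hj : (j : ℕ) = (i : ℕ) + 1)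
    (hjm : (j : ℕ) + 2 ≤ m) : (e m i * e m j) ^ 3 = 1 := by
  rw [e_eq_lo m i (by omega), e_eq_lo m j (by omega),
    show ((j:ℕ):ℤ) = ((i:ℕ):ℤ) + 1 by omega]
  exact relation3' (m:ℤ) ((i:ℕ):ℤ) (by omega)

/-- Distant generators commute. -/
lemma rel_two (m : ℕ) (hm : 2 ≤ m) (i j : Fin m) (hne : (i : ℕ) ≠ (j : ℕ))
    (hnadj : (j : ℕ) + 1 ≠ (i : ℕ) ∧ (i : ℕ) + 1 ≠ (j : ℕ)) :
    Commute (e m i) (e m j) := by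
  have hilt := i.isLt
  have hjlt := j.isLt
  by_cases hbi : (i : ℕ) + 2 ≤ m <;> by_cases hbj : (j : ℕ) + 2 ≤ m
  · rw [e_eq_lo m i hbi, e_eq_lo m j hbj]
    have c1 := commute_swap_swap (((i:ℕ):ℤ)+1) ((((i:ℕ):ℤ)+1)+1) (((j:ℕ):ℤ)+1)
      ((((j:ℕ):ℤ)+1)+1) (by omega) (by omega) (by omega) (by omega)
    have c2 := commute_swap_swap (((i:ℕ):ℤ)+1) ((((i:ℕ):ℤ)+1)+1)
      ((2*(m:ℤ)-((j:ℕ):ℤ))-1) (2*(m:ℤ)-((j:ℕ):ℤ)) (by omega) (by omega) (by omega) (by omega)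
    have c3 := commute_swap_swap ((2*(m:ℤ)-((i:ℕ):ℤ))-1) (2*(m:ℤ)-((i:ℕ):ℤ))
      (((j:ℕ):ℤ)+1) ((((j:ℕ):ℤ)+1)+1) (by omega) (by omega) (by omega) (by omega)
    have c4 := commute_swap_swap ((2*(m:ℤ)-((i:ℕ):ℤ))-1) (2*(m:ℤ)-((i:ℕ):ℤ))
      ((2*(m:ℤ)-((j:ℕ):ℤ))-1) (2*(m:ℤ)-((j:ℕ):ℤ)) (by omega) (by omega) (by omega) (by omega)
    exact (c1.mul_right c2).mul_left (c3.mul_right c4)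
  · rw [e_eq_lo m i hbi, e_eq_hi m j hbj]
    have c1 := commute_swap_swap (((i:ℕ):ℤ)+1) ((((i:ℕ):ℤ)+1)+1) (m:ℤ) ((m:ℤ)+1)
      (by omega) (by omega) (by omega) (by omega)
    have c2 := commute_swap_swap ((2*(m:ℤ)-((i:ℕ):ℤ))-1) (2*(m:ℤ)-((i:ℕ):ℤ)) (m:ℤ) ((m:ℤ)+1)
      (by omega) (by omega) (by omega) (by omega)
    exact c1.mul_left c2
  · rw [e_eq_hi m i hbi, e_eq_lo m j hbj]
    have c1 := commute_swap_swap (m:ℤ) ((m:ℤ)+1) (((j:ℕ):ℤ)+1) ((((j:ℕ):ℤ)+1)+1)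
      (by omega) (by omega) (by omega) (by omega)
    have c2 := commute_swap_swap (m:ℤ) ((m:ℤ)+1) ((2*(m:ℤ)-((j:ℕ):ℤ))-1) (2*(m:ℤ)-((j:ℕ):ℤ))
      (by omega) (by omega) (by omega) (by omega)
    exact c1.mul_right c2
  · exfalso; omega

lemma isLiftable (m : ℕ) (hm : 2 ≤ m) : (CoxeterMatrix.Bₙ m).IsLiftable (e m) := by
  intro i j
  have hilt := i.isLt
  have hjlt := j.isLt
  have hM : ∀ c : ℕ, ((i = j → c = 1) ∧
      (i ≠ j → ((i:ℕ) = m - 1 ∧ (j:ℕ) = m - 2 ∨ (j:ℕ) = m - 1 ∧ (i:ℕ) = m - 2) → c = 4) ∧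
      (i ≠ j → ¬((i:ℕ) = m - 1 ∧ (j:ℕ) = m - 2 ∨ (j:ℕ) = m - 1 ∧ (i:ℕ) = m - 2) →
        ((j:ℕ) + 1 = (i:ℕ) ∨ (i:ℕ) + 1 = (j:ℕ)) → c = 3) ∧
      (i ≠ j → ¬((i:ℕ) = m - 1 ∧ (j:ℕ) = m - 2 ∨ (j:ℕ) = m - 1 ∧ (i:ℕ) = m - 2) →
        ¬((j:ℕ) + 1 = (i:ℕ) ∨ (i:ℕ) + 1 = (j:ℕ)) → c = 2)) →
      CoxeterMatrix.Bₙ m i j = c := by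
    intro c hc
    unfold CoxeterMatrix.Bₙ
    show (Matrix.of _) i j = c
    simp only [Matrix.of_apply]
    split_ifs with h1 h2 h3
    · exact (hc.1 h1).symm
    · exact (hc.2.1 h1 h2).symm
    · exact (hc.2.2.1 h1 h2 h3).symm
    · exact (hc.2.2.2 h1 h2 h3).symm
  by_cases h1 : i = j
  · subst h1
    rw [hM 1 ⟨fun _ => rfl, fun h => absurd rfl h, fun h => absurd rfl h,
      fun h => absurd rfl h⟩, pow_one]
    exact e_mul_self m i
  · have hne : (i : ℕ) ≠ (j : ℕ) := fun h => h1 (Fin.ext h)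
    by_cases h4 : (i:ℕ) = m - 1 ∧ (j:ℕ) = m - 2 ∨ (j:ℕ) = m - 1 ∧ (i:ℕ) = m - 2
    · rw [hM 4 ⟨fun h => absurd h h1, fun _ _ => rfl,
        fun _ hn _ => absurd h4 hn, fun _ hn _ => absurd h4 hn⟩]
      rcases h4 with ⟨hi', hj'⟩ | ⟨hj', hi'⟩
      · exact pow_rev _ _ (e_mul_self m j) (e_mul_self m i) 4 (rel_four m hm j i hj' hi')
      · exact rel_four m hm i j hi' hj'
    · by_cases h3 : (j:ℕ) + 1 = (i:ℕ) ∨ (i:ℕ) + 1 = (j:ℕ)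
      · rw [hM 3 ⟨fun h => absurd h h1, fun _ hh => absurd hh h4,
          fun _ _ _ => rfl, fun _ _ hn => absurd h3 hn⟩]
        rcases h3 with hadj | hadj
        · have hb : (i:ℕ) + 2 ≤ m := by
            by_contra hcon
            exact h4 (Or.inl ⟨by omega, by omega⟩)
          exact pow_rev _ _ (e_mul_self m j) (e_mul_self m i) 3
            (rel_three m j i (by omega) (by omega))
        · have hb : (j:ℕ) + 2 ≤ m := by
            by_contra hcon
            exact h4 (Or.inr ⟨by omega, by omega⟩)
          exact rel_three m i j (by omega) (by omega)
      · rw [hM 2 ⟨fun h => absurd h h1, fun _ hh => absurd hh h4,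
          fun _ _ hh => absurd hh h3, fun _ _ _ => rfl⟩]
        exact sq_one _ _ (e_mul_self m i) (e_mul_self m j)
          (rel_two m hm i j hne (by omega))


/-- Product of the images of the letters of a word. -/
def E (m : ℕ) (w : List (Fin m)) : Equiv.Perm ℤ := (w.map (e m)).prod

lemma E_nil (m : ℕ) : E m [] = 1 := rfl

lemma E_cons (m : ℕ) (x : Fin m) (w : List (Fin m)) : E m (x :: w) = e m x * E m w := by
  simp [E]

lemma E_append (m : ℕ) (w w' : List (Fin m)) : E m (w ++ w') = E m w * E m w' := by
  simp [E]

lemma E_singleton (m : ℕ) (x : Fin m) : E m [x] = e m x := by simp [E]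

/-- The `l`-th block `(s_{m-l}, …, s_m)` of the staircase word. -/
def blockFun (m : ℕ) (hm : 0 < m) (l : ℕ) : List (Fin m) :=
  (List.range (l + 1)).map (fun t => ⟨(m - l + t - 1) % m, Nat.mod_lt _ hm⟩)

lemma blockFun_succ (m : ℕ) (hm : 0 < m) (l : ℕ) (hl : l + 2 ≤ m) :
    blockFun m hm (l+1) = ⟨m - l - 2, by omega⟩ :: blockFun m hm l := by
  unfold blockFun
  rw [List.range_succ_eq_map, List.map_cons, List.map_map]
  congr 1
  · apply Fin.ext
    show (m - (l+1) + 0 - 1) % m = m - l - 2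
    rw [show m - (l+1) + 0 - 1 = m - l - 2 by omega]
    exact Nat.mod_eq_of_lt (by omega)
  · apply List.map_congr_left
    intro t _
    apply Fin.ext
    show (m - (l+1) + Nat.succ t - 1) % m = (m - l + t - 1) % m
    rw [show m - (l+1) + Nat.succ t - 1 = m - l + t - 1 by omega]

/-- Action of the `l`-th block product. -/
def Bf (m l : ℕ) (x : ℤ) : ℤ :=
  if (m:ℤ) - l ≤ x ∧ x ≤ (m:ℤ) - 1 then x + 1
  else if x = (m:ℤ) then (m:ℤ) + l + 1
  else if (m:ℤ) + 2 ≤ x ∧ x ≤ (m:ℤ) + l + 1 then x - 1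
  else if x = (m:ℤ) + 1 then (m:ℤ) - l
  else x

lemma blockE (m : ℕ) (hm : 0 < m) : ∀ l : ℕ, l + 1 ≤ m → ∀ x : ℤ,
    E m (blockFun m hm l) x = Bf m l x := by
  intro l
  induction l with
  | zero =>
    intro _ x
    have hb : blockFun m hm 0 = [⟨m - 1, by omega⟩] := by
      unfold blockFun
      rw [show List.range (0+1) = [0] from rfl, List.map_cons, List.map_nil]
      congr 1
      apply Fin.ext
      show (m - 0 + 0 - 1) % m = m - 1
      rw [show m - 0 + 0 - 1 = m - 1 by omega]
      exact Nat.mod_eq_of_lt (by omega)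
    rw [hb, E_singleton, e_eq_hi m _ (by simp; omega)]
    simp only [Bf, Equiv.swap_apply_def]
    split_ifs <;> omega
  | succ l ih =>
    intro hl x
    rw [blockFun_succ m hm l (by omega), E_cons, Equiv.Perm.mul_apply, ih (by omega) x,
      e_eq_lo m _ (by simp; omega)]
    have hcast : ((((⟨m - l - 2, by omega⟩ : Fin m) : ℕ)) : ℤ) = (m:ℤ) - l - 2 := by
      simp only [Fin.val_mk]
      omega
    rw [hcast]
    obtain ⟨y, hy⟩ : ∃ y, Bf m l x = y := ⟨_, rfl⟩
    rw [hy]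
    simp only [Bf] at hy
    split_ifs at hy <;>
      (simp only [Bf, Equiv.Perm.mul_apply, Equiv.swap_apply_def]
       split_ifs <;> omega)


/-- Action of the product of the first `l` blocks. -/
def Pf (m l : ℕ) (x : ℤ) : ℤ :=
  if (m:ℤ) - l + 1 ≤ x ∧ x ≤ (m:ℤ) then x + l
  else if (m:ℤ) + 1 ≤ x ∧ x ≤ (m:ℤ) + l then x - l
  else x

/-- The first `l` blocks of the staircase word. -/
def prefixW (m : ℕ) (hm : 0 < m) (l : ℕ) : List (Fin m) :=
  (List.range l).flatMap (blockFun m hm)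

lemma prefixE (m : ℕ) (hm : 0 < m) : ∀ l : ℕ, l ≤ m → ∀ x : ℤ,
    E m (prefixW m hm l) x = Pf m l x := by
  intro l
  induction l with
  | zero =>
    intro _ x
    show E m [] x = Pf m 0 x
    rw [E_nil]
    simp only [Pf, Equiv.Perm.one_apply]
    split_ifs <;> omega
  | succ l ih =>
    intro hl x
    have hsp : prefixW m hm (l+1) = prefixW m hm l ++ blockFun m hm l := by
      unfold prefixW
      rw [List.range_succ, List.flatMap_append]
      simp
    rw [hsp, E_append, Equiv.Perm.mul_apply, blockE m hm l (by omega) x, ih (by omega)]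
    obtain ⟨y, hy⟩ : ∃ y, Bf m l x = y := ⟨_, rfl⟩
    rw [hy]
    simp only [Bf] at hy
    split_ifs at hy <;>
      (simp only [Pf]
       split_ifs <;> omega)

lemma wordListFin_eq (m : ℕ) (hm : 0 < m) : wordListFin m hm = prefixW m hm m := rfl

/-- Number of "B-inversions" (inversion pairs among positions 1..2m, plus sign changes). -/
def NInv (m : ℕ) (g : Equiv.Perm ℤ) : ℕ :=
  (((Finset.Icc (1:ℤ) (2*m)) ×ˢ (Finset.Icc (1:ℤ) (2*m))).filter
    (fun p => p.1 < p.2 ∧ g p.2 < g p.1)).card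

def NNeg (m : ℕ) (g : Equiv.Perm ℤ) : ℕ :=
  ((Finset.Icc (1:ℤ) (m:ℤ)).filter (fun j => (m:ℤ) < g j)).card

def NN (m : ℕ) (g : Equiv.Perm ℤ) : ℕ := NInv m g + NNeg m g

lemma NN_one (m : ℕ) : NN m 1 = 0 := by
  unfold NN NInv NNeg
  rw [Finset.filter_false_of_mem, Finset.filter_false_of_mem, Finset.card_empty,
    Finset.card_empty]
  · intro j hj
    simp only [Finset.mem_Icc] at hj
    simp only [Equiv.Perm.one_apply]
    omega
  · intro p hp
    simp only [Equiv.Perm.one_apply]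
    omega

lemma NInv_swap (m : ℕ) (g : Equiv.Perm ℤ) (a b : ℤ) (hab : b = a + 1) (h1 : 1 ≤ a)
    (h2 : b ≤ 2*m) : NInv m (g * Equiv.swap a b) ≤ NInv m g + 1 := by
  subst hab
  classical
  set σ := Equiv.swap a (a+1) with hσ
  set S : Finset (ℤ×ℤ) := ((Finset.Icc (1:ℤ) (2*m)) ×ˢ (Finset.Icc (1:ℤ) (2*m))).filter
    (fun p => p.1 < p.2 ∧ g p.2 < g p.1) with hS
  set S' : Finset (ℤ×ℤ) := ((Finset.Icc (1:ℤ) (2*m)) ×ˢ (Finset.Icc (1:ℤ) (2*m))).filter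
    (fun p => p.1 < p.2 ∧ (g * σ) p.2 < (g * σ) p.1) with hS'
  have hmaps : ∀ p ∈ S'.erase (a, a+1), (σ p.1, σ p.2) ∈ S := by
    intro p hp
    simp only [hS', Finset.mem_erase, Finset.mem_filter, Finset.mem_product,
      Finset.mem_Icc] at hp
    simp only [Equiv.Perm.mul_apply] at hp
    obtain ⟨hne, ⟨⟨h11, h12⟩, h21, h22⟩, hlt, hgv⟩ := hp
    have hne' : ¬ (p.1 = a ∧ p.2 = a + 1) := by
      intro ⟨u, v⟩
      exact hne (Prod.ext u v)
    simp only [hS, Finset.mem_filter, Finset.mem_product, Finset.mem_Icc]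
    refine ⟨⟨?_, ?_⟩, ?_, ?_⟩
    · constructor <;> (simp only [hσ, Equiv.swap_apply_def]; split_ifs <;> omega)
    · constructor <;> (simp only [hσ, Equiv.swap_apply_def]; split_ifs <;> omega)
    · simp only [hσ, Equiv.swap_apply_def]; split_ifs <;> omega
    · exact hgv
  have hinj : Set.InjOn (fun p : ℤ×ℤ => (σ p.1, σ p.2)) (S'.erase (a, a+1)) := by
    intro p _ q _ h
    simp only [Prod.mk.injEq] at h
    exact Prod.ext (σ.injective h.1) (σ.injective h.2)
  have hcard : (S'.erase (a, a+1)).card ≤ S.card :=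
    Finset.card_le_card_of_injOn _ hmaps hinj
  have hps := Finset.pred_card_le_card_erase (s := S') (a := (a, a+1))
  show S'.card ≤ S.card + 1
  omega

lemma NNeg_swap_top (m : ℕ) (g : Equiv.Perm ℤ) :
    NNeg m (g * Equiv.swap (m:ℤ) ((m:ℤ)+1)) ≤ NNeg m g + 1 := by
  classical
  set T : Finset ℤ := (Finset.Icc (1:ℤ) (m:ℤ)).filter (fun j => (m:ℤ) < g j) with hT
  set T' : Finset ℤ := (Finset.Icc (1:ℤ) (m:ℤ)).filter
    (fun j => (m:ℤ) < (g * Equiv.swap (m:ℤ) ((m:ℤ)+1)) j) with hT'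
  have hsub : T'.erase (m:ℤ) ⊆ T := by
    intro j hj
    simp only [hT', Finset.mem_erase, Finset.mem_filter, Finset.mem_Icc] at hj
    simp only [Equiv.Perm.mul_apply] at hj
    obtain ⟨hne, ⟨hj1, hj2⟩, hgt⟩ := hj
    rw [Equiv.swap_apply_of_ne_of_ne hne (by omega)] at hgt
    simp only [hT, Finset.mem_filter, Finset.mem_Icc]
    exact ⟨⟨hj1, hj2⟩, hgt⟩
  have h1 : (T'.erase (m:ℤ)).card ≤ T.card := Finset.card_le_card hsub
  have h2 := Finset.pred_card_le_card_erase (s := T') (a := (m:ℤ))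
  show T'.card ≤ T.card + 1
  omega

lemma e_maps_lo (m : ℕ) (i : Fin m) (h : (i : ℕ) + 2 ≤ m) (x : ℤ) (hx1 : 1 ≤ x)
    (hx2 : x ≤ (m:ℤ)) : 1 ≤ e m i x ∧ e m i x ≤ (m:ℤ) := by
  rw [e_eq_lo m i h]
  have := i.isLt
  simp only [Equiv.Perm.mul_apply, Equiv.swap_apply_def]
  split_ifs <;> omega

lemma e_invol_apply (m : ℕ) (i : Fin m) (x : ℤ) : e m i (e m i x) = x := by
  have h := e_mul_self m i
  calc e m i (e m i x) = (e m i * e m i) x := rfl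
    _ = x := by rw [h]; rfl

lemma NNeg_lo (m : ℕ) (g : Equiv.Perm ℤ) (i : Fin m) (h : (i : ℕ) + 2 ≤ m) :
    NNeg m (g * e m i) = NNeg m g := by
  classical
  unfold NNeg
  apply Finset.card_bij' (i := fun j _ => e m i j) (j := fun j _ => e m i j)
  · intro j hj
    simp only [Finset.mem_filter, Finset.mem_Icc] at hj ⊢
    simp only [Equiv.Perm.mul_apply] at hj ⊢
    obtain ⟨⟨h1, h2⟩, h3⟩ := hj
    exact ⟨⟨(e_maps_lo m i h j h1 h2).1, (e_maps_lo m i h j h1 h2).2⟩, h3⟩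
  · intro j hj
    simp only [Finset.mem_filter, Finset.mem_Icc] at hj ⊢
    simp only [Equiv.Perm.mul_apply] at hj ⊢
    obtain ⟨⟨h1, h2⟩, h3⟩ := hj
    refine ⟨⟨(e_maps_lo m i h j h1 h2).1, (e_maps_lo m i h j h1 h2).2⟩, ?_⟩
    rwa [e_invol_apply]
  · intro j _
    exact e_invol_apply m i j
  · intro j _
    exact e_invol_apply m i j

lemma NN_step (m : ℕ) (hm : 2 ≤ m) (g : Equiv.Perm ℤ) (i : Fin m) :
    NN m (g * e m i) ≤ NN m g + 2 := by
  have hilt := i.isLt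
  by_cases h : (i : ℕ) + 2 ≤ m
  · have hN : NInv m (g * e m i) ≤ NInv m g + 2 := by
      rw [e_eq_lo m i h, ← mul_assoc]
      calc NInv m ((g * Equiv.swap (((i:ℕ):ℤ) + 1) ((((i:ℕ):ℤ) + 1) + 1)) *
            Equiv.swap ((2 * (m:ℤ) - ((i:ℕ):ℤ)) - 1) (2 * (m:ℤ) - ((i:ℕ):ℤ)))
          ≤ NInv m (g * Equiv.swap (((i:ℕ):ℤ) + 1) ((((i:ℕ):ℤ) + 1) + 1)) + 1 :=
            NInv_swap m _ _ _ (by ring) (by omega) (by omega)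
        _ ≤ (NInv m g + 1) + 1 := by
            have := NInv_swap m g (((i:ℕ):ℤ) + 1) ((((i:ℕ):ℤ) + 1) + 1) (by ring)
              (by omega) (by omega)
            omega
    have hNeg := NNeg_lo m g i h
    unfold NN
    omega
  · have he := e_eq_hi m i h
    have hN : NInv m (g * e m i) ≤ NInv m g + 1 := by
      rw [he]
      exact NInv_swap m g (m:ℤ) ((m:ℤ)+1) rfl (by omega) (by omega)
    have hNeg : NNeg m (g * e m i) ≤ NNeg m g + 1 := by
      rw [he]
      exact NNeg_swap_top m g
    unfold NN
    omega

lemma NN_le (m : ℕ) (hm : 2 ≤ m) : ∀ w : List (Fin m), NN m (E m w) ≤ 2 * w.length := by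
  intro w
  induction w using List.reverseRecOn with
  | nil => rw [E_nil, NN_one]; omega
  | append_singleton ws i ih =>
    rw [E_append, E_singleton]
    have := NN_step m hm (E m ws) i
    simp only [List.length_append, List.length_singleton]
    omega


lemma NN_final (m : ℕ) (hm : 2 ≤ m) (hm0 : 0 < m) :
    NN m (E m (wordListFin m hm0)) = m*m + m := by
  have hPW : ∀ x : ℤ, E m (wordListFin m hm0) x = Pf m m x := by
    intro x
    rw [wordListFin_eq m hm0]
    exact prefixE m hm0 m le_rfl x
  have hNInv : NInv m (E m (wordListFin m hm0)) = m * m := by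
    unfold NInv
    have hset : (((Finset.Icc (1:ℤ) (2*m)) ×ˢ (Finset.Icc (1:ℤ) (2*m))).filter
        (fun p => p.1 < p.2 ∧ (E m (wordListFin m hm0)) p.2 < (E m (wordListFin m hm0)) p.1))
        = (Finset.Icc (1:ℤ) (m:ℤ)) ×ˢ (Finset.Icc ((m:ℤ)+1) (2*m)) := by
      ext ⟨x, y⟩
      simp only [Finset.mem_filter, Finset.mem_product, Finset.mem_Icc, hPW, Pf]
      split_ifs <;> omega
    rw [hset, Finset.card_product]
    rw [Int.card_Icc, Int.card_Icc]
    have h1 : ((m:ℤ) + 1 - 1).toNat = m := by omega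
    have h2 : ((2*(m:ℤ) + 1 - ((m:ℤ)+1))).toNat = m := by omega
    rw [h1, h2]
  have hNNeg : NNeg m (E m (wordListFin m hm0)) = m := by
    unfold NNeg
    rw [Finset.filter_true_of_mem, Int.card_Icc]
    · omega
    · intro j hj
      simp only [Finset.mem_Icc] at hj
      rw [hPW]
      simp only [Pf]
      split_ifs <;> omega
  unfold NN
  omega

lemma prefixW_length (m : ℕ) (hm0 : 0 < m) : ∀ l : ℕ,
    2 * (prefixW m hm0 l).length = l*l + l := by
  intro l
  induction l with
  | zero => rfl
  | succ l ih =>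
    have hsp : prefixW m hm0 (l+1) = prefixW m hm0 l ++ blockFun m hm0 l := by
      unfold prefixW
      rw [List.range_succ, List.flatMap_append]
      simp
    rw [hsp, List.length_append]
    have hbl : (blockFun m hm0 l).length = l + 1 := by
      unfold blockFun
      rw [List.length_map, List.length_range]
    have hsq : (l+1)*(l+1) = l*l + 2*l + 1 := by ring
    omega

end StaircaseAux

/-- In the Coxeter group of type `B_m` (simple generators `s_1,…,s_m`,
with `m(i,i+1) = 3` for `i ≤ m−2`, `m(m−1,m) = 4`, and `m(i,j) = 2` otherwise for
`i ≠ j`), the concatenation of the blocks `(s_{m−l},…,s_m)` for `l = 0,…,m−1` is a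
reduced word; equivalently, the Coxeter length of its product is `m(m+1)/2`. -/
theorem staircase_word_is_reduced (m : ℕ) (hm : 2 ≤ m) :
    (CoxeterMatrix.Bₙ m).toCoxeterSystem.IsReduced (wordListFin m (by omega)) ∧
    (CoxeterMatrix.Bₙ m).toCoxeterSystem.length
        ((CoxeterMatrix.Bₙ m).toCoxeterSystem.wordProd (wordListFin m (by omega)))
      = m * (m + 1) / 2 := by
  have hm0 : 0 < m := by omega
  set cs := (CoxeterMatrix.Bₙ m).toCoxeterSystem with hcs
  have hlift : (CoxeterMatrix.Bₙ m).IsLiftable (StaircaseAux.e m) :=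
    StaircaseAux.isLiftable m hm
  set φ := cs.lift ⟨StaircaseAux.e m, hlift⟩ with hφ
  have hφs : ∀ w : List (Fin m), φ (cs.wordProd w) = StaircaseAux.E m w := by
    intro w
    induction w with
    | nil => rw [CoxeterSystem.wordProd_nil, map_one, StaircaseAux.E_nil]
    | cons a l ih =>
      rw [CoxeterSystem.wordProd_cons, map_mul, ih, StaircaseAux.E_cons, hφ,
        CoxeterSystem.lift_apply_simple]
  obtain ⟨K, hK⟩ : ∃ K, m*m = K := ⟨_, rfl⟩
  have hlen2 : 2 * (wordListFin m hm0).length = K + m := by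
    rw [StaircaseAux.wordListFin_eq m hm0, StaircaseAux.prefixW_length m hm0 m, hK]
  set w0 := cs.wordProd (wordListFin m hm0) with hw0
  obtain ⟨ω, hω1, hω2⟩ := cs.exists_reduced_word w0
  have hNle : StaircaseAux.NN m (StaircaseAux.E m ω) ≤ 2 * ω.length :=
    StaircaseAux.NN_le m hm ω
  have hEω : StaircaseAux.E m ω = StaircaseAux.E m (wordListFin m hm0) := by
    rw [← hφs, ← hφs, ← hω2]
  rw [hEω, StaircaseAux.NN_final m hm hm0, hK] at hNle
  have hup : cs.length w0 ≤ (wordListFin m hm0).length := by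
    rw [hw0]
    exact cs.length_wordProd_le _
  have hlow : K + m ≤ 2 * cs.length w0 := by
    have hωl : cs.length w0 = ω.length := by rw [hω2]; exact hω1.eq
    omega
  have hred : cs.length w0 = (wordListFin m hm0).length := by omega
  constructor
  · show cs.length (cs.wordProd (wordListFin m (by omega))) = (wordListFin m (by omega)).length
    exact hred
  · show cs.length w0 = m * (m + 1) / 2
    have hmm : m * (m+1) = K + m := by rw [← hK]; ring
    omega

end
end
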